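/- arXiv:2509.14454 — 2 statements merged into one kernel-verified Lean document; each statement's English description precedes it below -/
import Mathlib

section
/- For v = (p,q) ∈ ℤ² with p² + q² ≥ 2, the product T_v T_{C₄v}, where C₄ = [[0,-1],[1,0]], has infinite order in SL₂(ℤ). -/
open Matrix

/-- The symplectic transvection `T_v(x) = x + ω(x,v) v` in matrix form, where
`ω((a,b),(c,d)) = a d - b c` is the standard symplectic form on `ℤ²`. -/
def transvection₂ (v : Fin 2 → ℤ) : Matrix (Fin 2) (Fin 2) ℤ :=
  !![1 + v 0 * v 1, -(v 0) ^ 2; (v 1) ^ 2, 1 - v 0 * v 1]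


def cheb (t : ℤ) : ℕ → ℤ
  | 0 => 0
  | 1 => 1
  | (n+2) => t * cheb t (n+1) - cheb t n

lemma cheb_bound (t : ℤ) (ht : t ≤ -2) :
    ∀ n : ℕ, (n : ℤ) ≤ (-1)^(n+1) * cheb t n ∧
      (-1)^(n+1) * cheb t n + 1 ≤ (-1)^(n+2) * cheb t (n+1) := by
  intro n
  induction n with
  | zero => simp [cheb]
  | succ m ih =>
    obtain ⟨h1, h2⟩ := ih
    have hX : ((m:ℤ)+1) ≤ (-1)^(m+2) * cheb t (m+1) := by linarith
    constructor
    · push_cast; linarith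
    · have hc : cheb t (m+2) = t * cheb t (m+1) - cheb t m := rfl
      have he : ((-1:ℤ))^(m+3) * (t * cheb t (m+1) - cheb t m)
          = (-t) * ((-1)^(m+2) * cheb t (m+1)) - (-1)^(m+1) * cheb t m := by ring
      show (-1:ℤ)^(m+2) * cheb t (m+1) + 1 ≤ (-1)^(m+3) * cheb t (m+2)
      rw [hc, he]
      nlinarith [mul_nonneg (by linarith : (0:ℤ) ≤ -t-2)
        (by linarith : (0:ℤ) ≤ (-1)^(m+2) * cheb t (m+1))]

lemma cheb_succ_ne (t : ℤ) (ht : t ≤ -2) (n : ℕ) : cheb t (n+1) ≠ 0 := by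
  obtain ⟨h1, h2⟩ := cheb_bound t ht n
  intro h
  rw [h] at h2
  simp at h2
  linarith

lemma cayley (A : Matrix (Fin 2) (Fin 2) ℤ) (hd : A.det = 1) :
    A * A = A.trace • A - 1 := by
  rw [Matrix.det_fin_two] at hd
  ext i j
  rw [Matrix.trace_fin_two]
  fin_cases i <;> fin_cases j <;>
    simp only [Matrix.mul_apply, Fin.sum_univ_two, Matrix.sub_apply, Matrix.smul_apply,
      smul_eq_mul, Matrix.one_apply, Fin.zero_eta, Fin.mk_one, if_true, if_false,
      Fin.one_eq_zero_iff, Fin.zero_eq_one_iff, ite_true, ite_false, eq_self_iff_true,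
      Nat.succ_ne_self, one_ne_zero, zero_ne_one, if_neg, Fin.isValue] <;>
    (try simp) <;> linarith [hd]

lemma pow_formula (A : Matrix (Fin 2) (Fin 2) ℤ) (t : ℤ) (hA : A * A = t • A - 1) :
    ∀ n, A ^ (n+1) = cheb t (n+1) • A - cheb t n • 1 := by
  intro n
  induction n with
  | zero => simp [cheb]
  | succ m ih =>
    have h2 : A ^ (m+2) = A ^ (m+1) * A := by rw [pow_succ]
    rw [h2, ih]
    have hc : cheb t (m+2) = t * cheb t (m+1) - cheb t m := rfl
    rw [hc, sub_mul, smul_mul_assoc, smul_mul_assoc, one_mul, hA]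
    module

lemma key (A : Matrix (Fin 2) (Fin 2) ℤ) (hd : A.det = 1) (ht : A.trace ≤ -2)
    (hA : A ≠ -1) : ¬ IsOfFinOrder A := by
  intro hfin
  obtain ⟨n, hn, hpow⟩ := isOfFinOrder_iff_pow_eq_one.mp hfin
  obtain ⟨m, rfl⟩ := Nat.exists_eq_succ_of_ne_zero hn.ne'
  rw [pow_formula A A.trace (cayley A hd) m] at hpow
  have hc1 : cheb A.trace (m+1) ≠ 0 := cheb_succ_ne A.trace ht m
  set c1 := cheb A.trace (m+1)
  set c0 := cheb A.trace m
  have e := fun i j => congrFun (congrFun hpow i) j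
  have e01 : c1 * A 0 1 - c0 * 0 = 0 := by
    have := e 0 1
    simp only [Matrix.sub_apply, Matrix.smul_apply, smul_eq_mul, Matrix.one_apply] at this
    simpa using this
  have e10 : c1 * A 1 0 - c0 * 0 = 0 := by
    have := e 1 0
    simp only [Matrix.sub_apply, Matrix.smul_apply, smul_eq_mul, Matrix.one_apply] at this
    simpa using this
  have e00 : c1 * A 0 0 - c0 * 1 = 1 := by
    have := e 0 0
    simp only [Matrix.sub_apply, Matrix.smul_apply, smul_eq_mul, Matrix.one_apply] at this
    simpa using this
  have e11 : c1 * A 1 1 - c0 * 1 = 1 := by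
    have := e 1 1
    simp only [Matrix.sub_apply, Matrix.smul_apply, smul_eq_mul, Matrix.one_apply] at this
    simpa using this
  have h01 : A 0 1 = 0 := by
    have : c1 * A 0 1 = 0 := by linarith
    exact (mul_eq_zero.mp this).resolve_left hc1
  have h10 : A 1 0 = 0 := by
    have : c1 * A 1 0 = 0 := by linarith
    exact (mul_eq_zero.mp this).resolve_left hc1
  have hdiag : A 0 0 = A 1 1 := by
    have : c1 * A 0 0 = c1 * A 1 1 := by linarith
    exact mul_left_cancel₀ hc1 this
  rw [Matrix.det_fin_two] at hd
  rw [Matrix.trace_fin_two] at ht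
  have ha : A 0 0 = -1 := by nlinarith [hd, ht, hdiag, h01, h10]
  apply hA
  rw [Matrix.eta_fin_two A, h01, h10, ha, ← hdiag, ha]
  ext i j
  fin_cases i <;> fin_cases j <;> simp [Matrix.neg_apply, Matrix.one_apply]


/-- For `v = (p,q) ∈ ℤ²` with `p² + q² ≥ 2`, the product `T_v T_{C₄v}`
(where `C₄ = [[0,-1],[1,0]]`) has infinite order in `SL₂(ℤ)`. -/
theorem infinite_order_C4 (p q : ℤ) (h : 2 ≤ p ^ 2 + q ^ 2) :
    ¬ IsOfFinOrder
      (transvection₂ ![p, q] *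
        transvection₂ ((!![0, -1; 1, 0] : Matrix (Fin 2) (Fin 2) ℤ) *ᵥ ![p, q])) := by
  have hv : (!![0, -1; 1, 0] : Matrix (Fin 2) (Fin 2) ℤ) *ᵥ ![p, q] = ![-q, p] := by
    funext i
    fin_cases i <;> simp [Matrix.mulVec, dotProduct, Fin.sum_univ_two]
  rw [hv]
  set M := transvection₂ ![p, q] * transvection₂ ![-q, p] with hMdef
  have hM : M = !![1 - p^2*q^2 - p^4, -(1 + p*q)*(p^2+q^2);
      (1 - p*q)*(p^2+q^2), 1 - p^2*q^2 - q^4] := by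
    rw [hMdef]
    simp only [transvection₂, Matrix.cons_val_zero, Matrix.cons_val_one, Matrix.head_cons]
    ext i j
    fin_cases i <;> fin_cases j <;>
      simp [Matrix.mul_apply, Fin.sum_univ_two] <;> ring
  apply key
  · rw [hM, Matrix.det_fin_two_of]
    ring_nf
  · rw [hM, Matrix.trace_fin_two_of]
    nlinarith [sq_nonneg (p^2 + q^2 - 2), sq_nonneg p, sq_nonneg q]
  · intro heq
    rw [hM] at heq
    have e01 := congrFun (congrFun heq 0) 1
    have e10 := congrFun (congrFun heq 1) 0
    simp [Matrix.neg_apply, Matrix.one_apply] at e01 e10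
    rcases e01 with h1|h1 <;> rcases e10 with h2|h2 <;> linarith
end

section
/- For v = (p,q) ∈ ℤ² and C₃ = [[0,-1],[1,-1]], the trace of T_v T_{C₃v} T_{C₃²v} equals -(N+1)(N² + 2N - 2), where N = p² + pq + q². -/
open Matrix

/-- For `v = (p,q)` and `C₃ = [[0,-1;1,-1]]`,
`tr(T_v T_{C₃v} T_{C₃²v}) = -(N+1)(N² + 2N - 2)` where `N = p² - pq + q²` (the norm of `p + qω`). -/
theorem trace_C3 (p q : ℤ) :
    letI C₃ : Matrix (Fin 2) (Fin 2) ℤ := !![0, -1; 1, -1]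
    letI N : ℤ := p ^ 2 - p * q + q ^ 2
    (transvection₂ ![p, q] * transvection₂ (C₃ *ᵥ ![p, q]) *
        transvection₂ ((C₃ ^ 2) *ᵥ ![p, q])).trace
      = -((N + 1) * (N ^ 2 + 2 * N - 2)) := by
  simp only [transvection₂, pow_two, Matrix.mulVec, Matrix.trace_fin_two]
  simp [Matrix.mul_apply, Fin.sum_univ_succ, dotProduct]
  ring
end
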